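/- arXiv:1807.04751 — 5 statements merged into one kernel-verified Lean document; each statement's English description precedes it below -/
import Mathlib

section
/- Let X have the Pareto distribution with parameters α > 0 and δ > 0. Then Q1(X) − 3·IQR(X) = δ·4^{1/α}·(4·3^{−1/α} − 3) ≤ δ, and consequently p_eL(X) = P(X < Q1(X) − 3·IQR(X)) = 0. -/
open MeasureTheory Real

variable {Ω : Type*} [MeasurableSpace Ω]

/-- Generalized inverse of the c.d.f.: `F⁻(p) = inf {x : F(x) ≥ p}`. -/
noncomputable def quantile (μ : Measure Ω) (X : Ω → ℝ) (p : ℝ) : ℝ :=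
  sInf {x : ℝ | p ≤ (μ {ω | X ω ≤ x}).toReal}

noncomputable def Q1 (μ : Measure Ω) (X : Ω → ℝ) : ℝ := quantile μ X (1/4)

noncomputable def Q3 (μ : Measure Ω) (X : Ω → ℝ) : ℝ := quantile μ X (3/4)

noncomputable def IQR (μ : Measure Ω) (X : Ω → ℝ) : ℝ := Q3 μ X - Q1 μ X

/-- Probability of a left extreme outlier. -/
noncomputable def peL (μ : Measure Ω) (X : Ω → ℝ) : ℝ :=
  (μ {ω | X ω < Q1 μ X - 3 * IQR μ X}).toReal

/-- Probability of a right extreme outlier. -/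
noncomputable def peR (μ : Measure Ω) (X : Ω → ℝ) : ℝ :=
  (μ {ω | Q3 μ X + 3 * IQR μ X < X ω}).toReal

noncomputable def pe2 (μ : Measure Ω) (X : Ω → ℝ) : ℝ := peL μ X + peR μ X

/-! The quartiles of a Pareto law are `δ (4/3)^{1/α}` and `δ 4^{1/α}`, so with `a = (4/3)^{1/α}` and
`b = 3^{1/α}` the lower extreme fence is `δ a (4 - 3b)`. As `a ≤ b` and `1 ≤ b`, the factor
`a (4 - 3b)` is at most `b (4 - 3b) ≤ 1` when `b ≤ 4/3` and negative otherwise. Since `X ≥ δ`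
almost surely, no mass lies below the fence. -/

lemma le_one_sub_div_rpow_iff {α δ p x : ℝ} (hα : 0 < α) (hδ : 0 < δ) (hp : p < 1)
    (hx : 0 < x) : p ≤ 1 - (δ / x) ^ α ↔ δ * ((1 - p)⁻¹) ^ (1 / α) ≤ x := by
  have hq : 0 < 1 - p := by linarith
  rw [inv_rpow hq.le, ← div_eq_mul_inv, div_le_iff₀ (by positivity), ← div_le_iff₀' hx, one_div,
    le_rpow_inv_iff_of_pos (by positivity) hq.le hα]
  constructor <;> intro h <;> linarith

lemma mul_four_sub_three_mul_le_one {a b : ℝ} (ha : 0 ≤ a) (hab : a ≤ b) (hb : 1 ≤ b) :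
    a * (4 - 3 * b) ≤ 1 := by
  rcases le_total (4 - 3 * b) 0 with hneg | hpos
  · nlinarith
  · calc a * (4 - 3 * b) ≤ b * (4 - 3 * b) := mul_le_mul_of_nonneg_right hab hpos
      _ ≤ 1 := by nlinarith

lemma measure_lt_eq_zero {μ : Measure Ω} {X : Ω → ℝ} {c : ℝ}
    (h : ∀ x < c, μ {ω | X ω ≤ x} = 0) : μ {ω | X ω < c} = 0 := by
  refine measure_mono_null (t := ⋃ q : {q : ℚ // (q : ℝ) < c}, {ω | X ω ≤ q}) ?_
    (measure_iUnion_null fun q => h q q.2)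
  intro ω hω
  obtain ⟨q, hXq, hqc⟩ := exists_rat_btwn (show X ω < c from hω)
  exact Set.mem_iUnion.2 ⟨⟨q, hqc⟩, hXq.le⟩

lemma quantile_eq_of_forall_le_iff {μ : Measure Ω} {X : Ω → ℝ} {p q : ℝ}
    (h : ∀ x, p ≤ (μ {ω | X ω ≤ x}).toReal ↔ q ≤ x) : quantile μ X p = q := by
  rw [quantile, show {x : ℝ | p ≤ (μ {ω | X ω ≤ x}).toReal} = Set.Ici q from Set.ext h, csInf_Ici]

section Pareto

variable {μ : Measure Ω} [IsProbabilityMeasure μ] {X : Ω → ℝ} {α δ : ℝ}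

lemma pareto_cdf (hX : Measurable X)
    (htail : ∀ x : ℝ, δ ≤ x → (μ {ω | x < X ω}).toReal = (δ / x) ^ α)
    {x : ℝ} (hx : δ ≤ x) : (μ {ω | X ω ≤ x}).toReal = 1 - (δ / x) ^ α := by
  have hcompl : {ω | X ω ≤ x} = {ω | x < X ω}ᶜ := by ext ω; simp
  rw [hcompl, prob_compl_eq_one_sub (measurableSet_lt measurable_const hX),
    ENNReal.toReal_sub_of_le prob_le_one ENNReal.one_ne_top, ENNReal.toReal_one, htail x hx]

lemma pareto_quantile (hX : Measurable X) (ha : 0 < α) (hd : 0 < δ)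
    (htail : ∀ x : ℝ, δ ≤ x → (μ {ω | x < X ω}).toReal = (δ / x) ^ α)
    (hlow : ∀ x : ℝ, x < δ → μ {ω | X ω ≤ x} = 0) {p : ℝ} (hp0 : 0 < p) (hp1 : p < 1) :
    quantile μ X p = δ * ((1 - p)⁻¹) ^ (1 / α) := by
  have hδq : δ ≤ δ * ((1 - p)⁻¹) ^ (1 / α) :=
    le_mul_of_one_le_right hd.le <| one_le_rpow (one_le_inv₀ (by linarith) |>.2 (by linarith))
      (by positivity)
  refine quantile_eq_of_forall_le_iff fun x => ?_
  rcases lt_or_ge x δ with hxδ | hδx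
  · simp only [hlow x hxδ, ENNReal.toReal_zero]
    constructor <;> intro h <;> linarith
  · rw [pareto_cdf hX htail hδx, le_one_sub_div_rpow_iff ha hd hp1 (hd.trans_le hδx)]

end Pareto

theorem pareto_peL_zero (μ : Measure Ω) [IsProbabilityMeasure μ]
    (X : Ω → ℝ) (hX : Measurable X) (α δ : ℝ) (ha : 0 < α) (hd : 0 < δ)
    (htail : ∀ x : ℝ, δ ≤ x → (μ {ω | x < X ω}).toReal = (δ / x) ^ α)
    (hlow : ∀ x : ℝ, x < δ → μ {ω | X ω ≤ x} = 0) :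
    Q1 μ X - 3 * IQR μ X = δ * (4:ℝ) ^ (1/α) * (4 * (3:ℝ) ^ (-1/α) - 3) ∧
    Q1 μ X - 3 * IQR μ X ≤ δ ∧
    peL μ X = 0 := by
  have hQ1 : Q1 μ X = δ * (4 / 3 : ℝ) ^ (1 / α) := by
    rw [Q1, pareto_quantile hX ha hd htail hlow (by norm_num) (by norm_num)]
    norm_num
  have hQ3 : Q3 μ X = δ * (4 : ℝ) ^ (1 / α) := by
    rw [Q3, pareto_quantile hX ha hd htail hlow (by norm_num) (by norm_num)]
    norm_num
  have hfence : Q1 μ X - 3 * IQR μ X = δ * ((4 / 3 : ℝ) ^ (1 / α) * (4 - 3 * 3 ^ (1 / α))) := by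
    have h4 : (4 : ℝ) ^ (1 / α) = (4 / 3 : ℝ) ^ (1 / α) * 3 ^ (1 / α) := by
      rw [← mul_rpow (by norm_num) (by norm_num)]
      norm_num
    rw [IQR, hQ1, hQ3, h4]
    ring
  have hle : Q1 μ X - 3 * IQR μ X ≤ δ := by
    rw [hfence]
    exact mul_le_of_le_one_right hd.le <| mul_four_sub_three_mul_le_one (by positivity)
      (rpow_le_rpow (by norm_num) (by norm_num) (by positivity))
      (one_le_rpow (by norm_num) (by positivity))
  refine ⟨?_, hle, ?_⟩
  · rw [hfence, div_rpow (by norm_num) (by norm_num), neg_div, rpow_neg (by norm_num)]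
    have : (0 : ℝ) < 3 ^ (1 / α) := by positivity
    field_simp
  · have hnull : μ {ω | X ω < Q1 μ X - 3 * IQR μ X} = 0 :=
      measure_mono_null (fun ω (hω : X ω < _) => hω.trans_le hle) (measure_lt_eq_zero hlow)
    rw [peL, hnull, ENNReal.toReal_zero]
end

section
/- Let X have the Fréchet distribution with parameters α > 0, μ ∈ ℝ, σ > 0. Then p_eR(X) = 1 − exp(−[4·(log(4/3))^{−1/α} − 3·(log 4)^{−1/α}]^{−α}). -/
open MeasureTheory Real

variable {Ω : Type*} [MeasurableSpace Ω]

/-! The Fréchet c.d.f. is continuous and strictly increasing on `(m, ∞)`, so its `p`-quantile is the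
unique solution `m + σ (log p⁻¹)^(-1/α)` of `F x = p`. The upper fence `Q3 + 3 IQR` is then
`m + σ t` with `t = 4 (log (4/3))^(-1/α) - 3 (log 4)^(-1/α) > 0`, and `peR = 1 - F (m + σ t)`. -/

lemma quantile_eq_of_forall_lt {μ : Measure Ω} {X : Ω → ℝ} {p x₀ : ℝ}
    (h₀ : p ≤ (μ {ω | X ω ≤ x₀}).toReal) (hlt : ∀ x < x₀, (μ {ω | X ω ≤ x}).toReal < p) :
    quantile μ X p = x₀ :=
  IsLeast.csInf_eq ⟨h₀, fun _ hx => not_lt.1 fun h => (hlt _ h).not_ge hx⟩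

lemma peR_eq_one_sub (μ : Measure Ω) [IsProbabilityMeasure μ] {X : Ω → ℝ} (hX : Measurable X) :
    peR μ X = 1 - (μ {ω | X ω ≤ Q3 μ X + 3 * IQR μ X}).toReal := by
  have hset : {ω | Q3 μ X + 3 * IQR μ X < X ω} = {ω | X ω ≤ Q3 μ X + 3 * IQR μ X}ᶜ := by
    ext; simp [not_le]
  rw [peR, hset, ← measureReal_def,
    probReal_compl_eq_one_sub (measurableSet_le hX measurable_const), measureReal_def]

section StandardFrechet

variable {α p : ℝ} (ha : 0 < α) (hp0 : 0 < p) (hp1 : p < 1)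
include hp0 hp1

lemma log_inv_pos_of_lt_one : 0 < log p⁻¹ := by
  rw [log_inv]; exact neg_pos.2 (log_neg hp0 hp1)

include ha

lemma exp_neg_rpow_neg_lt_iff {t : ℝ} (ht : 0 < t) :
    exp (-t ^ (-α)) < p ↔ t < (log p⁻¹) ^ (-1 / α) := by
  rw [← lt_log_iff_exp_lt hp0, show (-1 / α) = (-α)⁻¹ by rw [neg_div, one_div, neg_inv],
    lt_rpow_inv_iff_of_neg ht (log_inv_pos_of_lt_one hp0 hp1) (neg_lt_zero.2 ha), log_inv]
  constructor <;> intro h <;> linarith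

lemma exp_neg_rpow_neg_rpow_eq : exp (-((log p⁻¹) ^ (-1 / α)) ^ (-α)) = p := by
  rw [show (-1 / α) = (-α)⁻¹ by rw [neg_div, one_div, neg_inv],
    rpow_inv_rpow (log_inv_pos_of_lt_one hp0 hp1).le (neg_ne_zero.2 ha.ne'), log_inv, neg_neg,
    exp_log hp0]

end StandardFrechet

lemma frechet_quantile {μ : Measure Ω} {X : Ω → ℝ} {α m σ : ℝ} (ha : 0 < α) (hs : 0 < σ)
    (hcdf : ∀ x : ℝ, m < x →
      (μ {ω | X ω ≤ x}).toReal = Real.exp (-((x - m) / σ) ^ (-α)))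
    (hlow : ∀ x : ℝ, x ≤ m → μ {ω | X ω ≤ x} = 0)
    {p : ℝ} (hp0 : 0 < p) (hp1 : p < 1) :
    quantile μ X p = m + σ * (log p⁻¹) ^ (-1 / α) := by
  have hq : 0 < σ * (log p⁻¹) ^ (-1 / α) :=
    mul_pos hs (rpow_pos_of_pos (log_inv_pos_of_lt_one hp0 hp1) _)
  apply quantile_eq_of_forall_lt
  · rw [hcdf _ (by linarith), add_sub_cancel_left, mul_div_cancel_left₀ _ hs.ne',
      exp_neg_rpow_neg_rpow_eq ha hp0 hp1]
  · intro x hx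
    rcases le_or_gt x m with hxm | hxm
    · simpa [hlow x hxm] using hp0
    · rw [hcdf x hxm, exp_neg_rpow_neg_lt_iff ha hp0 hp1 (div_pos (sub_pos.2 hxm) hs),
        div_lt_iff₀' hs]
      linarith

theorem frechet_peR (μ : Measure Ω) [IsProbabilityMeasure μ]
    (X : Ω → ℝ) (hX : Measurable X) (α m σ : ℝ) (ha : 0 < α) (hs : 0 < σ)
    (hcdf : ∀ x : ℝ, m < x →
      (μ {ω | X ω ≤ x}).toReal = Real.exp (-((x - m) / σ) ^ (-α)))
    (hlow : ∀ x : ℝ, x ≤ m → μ {ω | X ω ≤ x} = 0) :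
    peR μ X = 1 - Real.exp
      (-(4 * (Real.log (4/3)) ^ (-1/α) - 3 * (Real.log 4) ^ (-1/α)) ^ (-α)) := by
  set a := log (4 / 3) ^ (-1 / α)
  set b := log 4 ^ (-1 / α)
  have hQ3 : Q3 μ X = m + σ * a := by
    rw [Q3, frechet_quantile ha hs hcdf hlow (by norm_num) (by norm_num)]; norm_num [a]
  have hQ1 : Q1 μ X = m + σ * b := by
    rw [Q1, frechet_quantile ha hs hcdf hlow (by norm_num) (by norm_num)]; norm_num [b]
  have hb : 0 < b := rpow_pos_of_pos (log_pos (by norm_num)) _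
  have hba : b < a :=
    rpow_lt_rpow_of_neg (log_pos (by norm_num)) (log_lt_log (by norm_num) (by norm_num))
      (div_neg_of_neg_of_pos (by norm_num) ha)
  have hfence : Q3 μ X + 3 * IQR μ X = m + σ * (4 * a - 3 * b) := by
    rw [IQR, hQ3, hQ1]; ring
  have ht : 0 < 4 * a - 3 * b := by linarith
  rw [peR_eq_one_sub μ hX, hfence, hcdf _ (lt_add_of_pos_right m (mul_pos hs ht)),
    add_sub_cancel_left, mul_div_cancel_left₀ _ hs.ne']
end

section
/- Let X have the Fréchet distribution with parameters α > 0, μ ∈ ℝ, σ > 0, and let α₀ = log(log 4 / log(4/3)) / log(4/3). If 0 < α ≤ α₀ then p_eL(X) = 0, while if α > α₀ then p_eL(X) = exp(−[4·(log 4)^{−1/α} − 3·(log(4/3))^{−1/α}]^{−α}) > 0. -/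
open MeasureTheory Real

variable {Ω : Type*} [MeasurableSpace Ω]

/-!
The Fréchet c.d.f. `G(x) = exp (-((x - m) / σ) ^ (-α))` is a continuous increasing
bijection from `(m, ∞)` onto `(0, 1)`, so the `p`-quantile is `m + σ (-log p) ^ (-1/α)`
and the lower fence is `m + σ t` with `t = 4 (log 4) ^ (-1/α) - 3 (log (4/3)) ^ (-1/α)`.
If `t ≤ 0` the fence lies below the support; otherwise, by continuity of `G`,
`P(X < m + σ t) = G(m + σ t) = exp (-t ^ (-α))`. Taking logarithms in
`3 (log (4/3)) ^ (-1/α) < 4 (log 4) ^ (-1/α)` gives the threshold `α₀`.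
-/

open Set

section Quantile

variable {μ : Measure Ω} {X : Ω → ℝ}

lemma quantile_eq_of_le_of_forall_lt {p q : ℝ} (hq : p ≤ (μ {ω | X ω ≤ q}).toReal)
    (hlt : ∀ x < q, (μ {ω | X ω ≤ x}).toReal < p) : quantile μ X p = q :=
  IsLeast.csInf_eq ⟨hq, fun x hx => not_lt.1 fun h => (hlt x h).not_ge hx⟩

lemma toReal_measure_lt_eq_of_continuousWithinAt [IsFiniteMeasure μ] {G : ℝ → ℝ} {a c : ℝ}
    (hac : a < c) (hF : ∀ x ∈ Ioc a c, (μ {ω | X ω ≤ x}).toReal = G x)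
    (hG : ContinuousWithinAt G (Iio c) c) : (μ {ω | X ω < c}).toReal = G c := by
  apply le_antisymm
  · rw [← hF c ⟨hac, le_rfl⟩]
    exact ENNReal.toReal_mono (measure_ne_top _ _) (measure_mono fun ω (h : X ω < c) => h.le)
  · refine le_of_tendsto hG ?_
    filter_upwards [Ioo_mem_nhdsLT hac] with x hx
    rw [← hF x (Ioo_subset_Ioc_self hx)]
    exact ENNReal.toReal_mono (measure_ne_top _ _)
      (measure_mono fun ω (h : X ω ≤ x) => h.trans_lt hx.2)

end Quantile

noncomputable def frechetCDF (α m σ x : ℝ) : ℝ := exp (-((x - m) / σ) ^ (-α))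

section FrechetCDF

variable {α m σ : ℝ}

lemma frechetCDF_add_mul (hσ : σ ≠ 0) (t : ℝ) :
    frechetCDF α m σ (m + σ * t) = exp (-t ^ (-α)) := by
  simp [frechetCDF, hσ]

lemma frechetCDF_add_mul_neg_log_rpow (hα : α ≠ 0) (hσ : σ ≠ 0) {p : ℝ} (hp0 : 0 < p)
    (hp1 : p ≤ 1) : frechetCDF α m σ (m + σ * (-log p) ^ (-1 / α)) = p := by
  have hlog : 0 ≤ -log p := neg_nonneg.2 (log_nonpos hp0.le hp1)
  have hexp : -1 / α * -α = 1 := by field_simp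
  rw [frechetCDF_add_mul hσ, ← rpow_mul hlog, hexp, rpow_one, neg_neg, exp_log hp0]

lemma frechetCDF_strictMonoOn (hα : 0 < α) (hσ : 0 < σ) :
    StrictMonoOn (frechetCDF α m σ) (Ioi m) := by
  intro x hx y hy hxy
  have hx' : 0 < (x - m) / σ := div_pos (sub_pos.2 hx) hσ
  have hxy' : (x - m) / σ < (y - m) / σ := by gcongr
  exact exp_lt_exp.2 (neg_lt_neg (rpow_lt_rpow_of_neg hx' hxy' (neg_neg_of_pos hα)))

lemma continuousAt_frechetCDF (hσ : σ ≠ 0) {x : ℝ} (hx : x ≠ m) :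
    ContinuousAt (frechetCDF α m σ) x := by
  have hx' : (x - m) / σ ≠ 0 := div_ne_zero (sub_ne_zero.2 hx) hσ
  exact ((continuousAt_id.sub continuousAt_const).div_const σ |>.rpow_const (.inl hx')).neg.rexp

end FrechetCDF

section Frechet

variable {μ : Measure Ω} {X : Ω → ℝ} {α m σ : ℝ}

lemma quantile_eq_of_frechet (hα : 0 < α) (hσ : 0 < σ)
    (hcdf : ∀ x, m < x → (μ {ω | X ω ≤ x}).toReal = frechetCDF α m σ x)
    (hlow : ∀ x ≤ m, μ {ω | X ω ≤ x} = 0) {p : ℝ} (hp0 : 0 < p) (hp1 : p < 1) :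
    quantile μ X p = m + σ * (-log p) ^ (-1 / α) := by
  have hm : m < m + σ * (-log p) ^ (-1 / α) :=
    lt_add_of_pos_right m (mul_pos hσ (rpow_pos_of_pos (neg_pos.2 (log_neg hp0 hp1)) _))
  have hq := frechetCDF_add_mul_neg_log_rpow (m := m) hα.ne' hσ.ne' hp0 hp1.le
  refine quantile_eq_of_le_of_forall_lt (hcdf _ hm ▸ hq.ge) fun x hx => ?_
  rcases le_or_gt x m with hxm | hxm
  · simpa [hlow x hxm] using hp0
  · rw [hcdf x hxm, ← hq]
    exact frechetCDF_strictMonoOn hα hσ hxm hm hx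

lemma Q1_sub_three_mul_IQR_of_frechet (hα : 0 < α) (hσ : 0 < σ)
    (hcdf : ∀ x, m < x → (μ {ω | X ω ≤ x}).toReal = frechetCDF α m σ x)
    (hlow : ∀ x ≤ m, μ {ω | X ω ≤ x} = 0) :
    Q1 μ X - 3 * IQR μ X =
      m + σ * (4 * log 4 ^ (-1 / α) - 3 * log (4 / 3) ^ (-1 / α)) := by
  have hlog₁ : -log (1 / 4) = log 4 := by rw [one_div, log_inv, neg_neg]
  have hlog₃ : -log (3 / 4) = log (4 / 3) := by rw [← log_inv, inv_div]
  rw [IQR, Q1, Q3, quantile_eq_of_frechet hα hσ hcdf hlow (by norm_num) (by norm_num),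
    quantile_eq_of_frechet hα hσ hcdf hlow (by norm_num) (by norm_num), hlog₁, hlog₃]
  ring

end Frechet

lemma four_mul_log_rpow_sub_three_mul_pos_iff {α : ℝ} (hα : 0 < α) :
    0 < 4 * log 4 ^ (-1 / α) - 3 * log (4 / 3) ^ (-1 / α) ↔
      log (log 4 / log (4 / 3)) / log (4 / 3) < α := by
  have hL₄ : 0 < log 4 := log_pos (by norm_num)
  have hL₃ : 0 < log (4 / 3) := log_pos (by norm_num)
  rw [sub_pos, ← log_lt_log_iff (by positivity) (by positivity),
    log_mul (by norm_num) (by positivity), log_mul (by norm_num) (by positivity),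
    log_rpow hL₃, log_rpow hL₄, div_lt_iff₀ hL₃,
    log_div hL₄.ne' hL₃.ne', ← sub_pos, ← sub_pos (a := α * log (4 / 3))]
  have hdiff : log 4 + -1 / α * log (log 4) - (log 3 + -1 / α * log (log (4 / 3))) =
      (α * log (4 / 3) - (log (log 4) - log (log (4 / 3)))) / α := by
    rw [log_div (by norm_num) (by norm_num)]
    field_simp
    ring
  rw [hdiff, div_pos_iff_of_pos_right hα]

theorem frechet_peL_general (μ : Measure Ω) [IsProbabilityMeasure μ]
    (X : Ω → ℝ) (α m σ : ℝ) (ha : 0 < α) (hs : 0 < σ)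
    (hcdf : ∀ x : ℝ, m < x →
      (μ {ω | X ω ≤ x}).toReal = Real.exp (-((x - m) / σ) ^ (-α)))
    (hlow : ∀ x : ℝ, x ≤ m → μ {ω | X ω ≤ x} = 0) :
    (α ≤ Real.log (Real.log 4 / Real.log (4/3)) / Real.log (4/3) → peL μ X = 0) ∧
    (Real.log (Real.log 4 / Real.log (4/3)) / Real.log (4/3) < α →
      peL μ X = Real.exp
        (-(4 * (Real.log 4) ^ (-1/α) - 3 * (Real.log (4/3)) ^ (-1/α)) ^ (-α)) ∧
      0 < peL μ X) := by
  set t := 4 * log 4 ^ (-1 / α) - 3 * log (4 / 3) ^ (-1 / α)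
  have hfence : Q1 μ X - 3 * IQR μ X = m + σ * t :=
    Q1_sub_three_mul_IQR_of_frechet ha hs hcdf hlow
  refine ⟨fun hle => ?_, fun hlt => ?_⟩
  · have ht : t ≤ 0 := not_lt.1 fun ht => hle.not_gt
      ((four_mul_log_rpow_sub_three_mul_pos_iff ha).1 ht)
    have hle_m : m + σ * t ≤ m :=
      add_le_of_nonpos_right (mul_nonpos_of_nonneg_of_nonpos hs.le ht)
    have hsub : {ω | X ω < m + σ * t} ⊆ {ω | X ω ≤ m} :=
      fun ω (h : X ω < m + σ * t) => (h.trans_le hle_m).le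
    rw [peL, hfence, measure_mono_null hsub (hlow m le_rfl), ENNReal.toReal_zero]
  · have ht : 0 < t := (four_mul_log_rpow_sub_three_mul_pos_iff ha).2 hlt
    have hm : m < m + σ * t := lt_add_of_pos_right m (mul_pos hs ht)
    have hpeL : peL μ X = exp (-t ^ (-α)) := by
      rw [peL, hfence, toReal_measure_lt_eq_of_continuousWithinAt (G := frechetCDF α m σ) hm
        (fun x hx => hcdf x hx.1) (continuousAt_frechetCDF hs.ne' hm.ne').continuousWithinAt,
        frechetCDF_add_mul hs.ne']
    exact ⟨hpeL, hpeL ▸ exp_pos _⟩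

theorem frechet_peL (μ : Measure Ω) [IsProbabilityMeasure μ]
    (X : Ω → ℝ) (hX : Measurable X) (α m σ : ℝ) (ha : 0 < α) (hs : 0 < σ)
    (hcdf : ∀ x : ℝ, m < x →
      (μ {ω | X ω ≤ x}).toReal = Real.exp (-((x - m) / σ) ^ (-α)))
    (hlow : ∀ x : ℝ, x ≤ m → μ {ω | X ω ≤ x} = 0) :
    (α ≤ Real.log (Real.log 4 / Real.log (4/3)) / Real.log (4/3) → peL μ X = 0) ∧
    (Real.log (Real.log 4 / Real.log (4/3)) / Real.log (4/3) < α →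
      peL μ X = Real.exp
        (-(4 * (Real.log 4) ^ (-1/α) - 3 * (Real.log (4/3)) ^ (-1/α)) ^ (-α)) ∧
      0 < peL μ X) :=
  frechet_peL_general μ X α m σ ha hs hcdf hlow
end

section
/- Let X have the negative Weibull distribution with parameters α > 0, μ ∈ ℝ, σ > 0. Then p_eL(X) = exp(−[4·(log 4)^{1/α} − 3·(log(4/3))^{1/α}]^α). -/
open MeasureTheory Real

variable {Ω : Type*} [MeasurableSpace Ω]

/-!
To the left of `m` the c.d.f. is the continuous, strictly increasing function
`exp (-((m - x)/σ)^α)`. Inverting it gives `Q1 = m - σ (log 4)^{1/α}` and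
`Q3 = m - σ (log (4/3))^{1/α}`, so the fence `Q1 - 3 IQR` is `m - σ t` with
`t = 4 (log 4)^{1/α} - 3 (log (4/3))^{1/α} > 0`; by continuity of the c.d.f. at that point,
`P(X < m - σ t) = P(X ≤ m - σ t) = exp (-t^α)`.
-/

lemma quantile_eq_of_le_of_lt {μ : Measure Ω} {X : Ω → ℝ} {p x₀ : ℝ}
    (h₀ : p ≤ (μ {ω | X ω ≤ x₀}).toReal)
    (hlt : ∀ y < x₀, (μ {ω | X ω ≤ y}).toReal < p) :
    quantile μ X p = x₀ :=
  IsLeast.csInf_eq ⟨h₀, fun y hy => not_lt.mp fun hyx => (hlt y hyx).not_ge hy⟩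

lemma toReal_measure_lt_eq_of_continuousWithinAt_s15 {μ : Measure Ω} [IsFiniteMeasure μ]
    {X : Ω → ℝ} {f : ℝ → ℝ} {x : ℝ}
    (hf : ∀ y ≤ x, (μ {ω | X ω ≤ y}).toReal = f y)
    (hcont : ContinuousWithinAt f (Set.Iio x) x) :
    (μ {ω | X ω < x}).toReal = f x := by
  apply le_antisymm
  · rw [← hf x le_rfl]
    exact ENNReal.toReal_mono (measure_ne_top μ _)
      (measure_mono fun ω (h : X ω < x) => h.le)
  · refine le_of_tendsto hcont (eventually_nhdsWithin_of_forall fun y (hy : y < x) => ?_)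
    rw [← hf y hy.le]
    exact ENNReal.toReal_mono (measure_ne_top μ _)
      (measure_mono fun ω (h : X ω ≤ y) => h.trans_lt hy)

noncomputable def negWeibullCDF (α m σ x : ℝ) : ℝ := exp (-(-(x - m) / σ) ^ α)

section NegWeibull

variable {α m σ : ℝ}

lemma negWeibullCDF_sub_mul (hσ : σ ≠ 0) (t : ℝ) :
    negWeibullCDF α m σ (m - σ * t) = exp (-t ^ α) := by
  rw [negWeibullCDF, show -(m - σ * t - m) / σ = t by field_simp; ring]

lemma negWeibullCDF_strictMonoOn (hα : 0 < α) (hσ : 0 < σ) :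
    StrictMonoOn (negWeibullCDF α m σ) (Set.Iic m) := by
  intro x hx y hy hxy
  have hy' : 0 ≤ -(y - m) / σ := div_nonneg (by linarith [Set.mem_Iic.mp hy]) hσ.le
  have hyx : -(y - m) / σ < -(x - m) / σ := div_lt_div_of_pos_right (by linarith) hσ
  exact exp_lt_exp.mpr (neg_lt_neg (rpow_lt_rpow hy' hyx hα))

lemma continuous_negWeibullCDF (hα : 0 < α) : Continuous (negWeibullCDF α m σ) := by
  unfold negWeibullCDF
  exact continuous_exp.comp ((continuous_id.rpow_const fun _ => Or.inr hα.le).comp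
    (by fun_prop)).neg

lemma negWeibullCDF_sub_mul_log_inv_rpow (hα : 0 < α) (hσ : σ ≠ 0) {p : ℝ}
    (hp0 : 0 < p) (hp1 : p ≤ 1) :
    negWeibullCDF α m σ (m - σ * log p⁻¹ ^ (1 / α)) = p := by
  have hlog : 0 ≤ log p⁻¹ := log_nonneg ((one_le_inv₀ hp0).mpr hp1)
  rw [negWeibullCDF_sub_mul hσ, one_div, rpow_inv_rpow hlog hα.ne', log_inv, neg_neg,
    exp_log hp0]

variable {μ : Measure Ω} {X : Ω → ℝ}

lemma quantile_eq_of_negWeibullCDF (hα : 0 < α) (hσ : 0 < σ)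
    (hcdf : ∀ x < m, (μ {ω | X ω ≤ x}).toReal = negWeibullCDF α m σ x)
    {p : ℝ} (hp0 : 0 < p) (hp1 : p < 1) :
    quantile μ X p = m - σ * log p⁻¹ ^ (1 / α) := by
  have hpos : 0 < σ * log p⁻¹ ^ (1 / α) :=
    mul_pos hσ (rpow_pos_of_pos (log_pos ((one_lt_inv₀ hp0).mpr hp1)) _)
  have hx₀ : m - σ * log p⁻¹ ^ (1 / α) < m := by linarith
  have hval := negWeibullCDF_sub_mul_log_inv_rpow (m := m) hα hσ.ne' hp0 hp1.le
  refine quantile_eq_of_le_of_lt (by rw [hcdf _ hx₀, hval]) fun y hy => ?_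
  rw [hcdf y (hy.trans hx₀), ← hval]
  exact negWeibullCDF_strictMonoOn hα hσ (hy.trans hx₀).le hx₀.le hy

lemma toReal_measure_lt_eq_negWeibullCDF [IsFiniteMeasure μ] (hα : 0 < α)
    (hcdf : ∀ x < m, (μ {ω | X ω ≤ x}).toReal = negWeibullCDF α m σ x)
    {x : ℝ} (hx : x < m) :
    (μ {ω | X ω < x}).toReal = negWeibullCDF α m σ x :=
  toReal_measure_lt_eq_of_continuousWithinAt_s15 (fun y hy => hcdf y (hy.trans_lt hx))
    (continuous_negWeibullCDF hα).continuousWithinAt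

end NegWeibull

theorem neg_weibull_peL_general (μ : Measure Ω) [IsProbabilityMeasure μ]
    (X : Ω → ℝ) (α m σ : ℝ) (ha : 0 < α) (hs : 0 < σ)
    (hcdf : ∀ x : ℝ, x < m →
      (μ {ω | X ω ≤ x}).toReal = Real.exp (-(-(x - m) / σ) ^ α)) :
    peL μ X = Real.exp
      (-(4 * (Real.log 4) ^ (1/α) - 3 * (Real.log (4/3)) ^ (1/α)) ^ α) := by
  set a := log 4 ^ (1 / α)
  set b := log (4 / 3) ^ (1 / α)
  have hba : b < a := rpow_lt_rpow (log_nonneg (by norm_num))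
    (log_lt_log (by norm_num) (by norm_num)) (by positivity)
  have hb : 0 < b := rpow_pos_of_pos (log_pos (by norm_num)) _
  have hQ1 : Q1 μ X = m - σ * a := by
    rw [Q1, quantile_eq_of_negWeibullCDF ha hs hcdf (by norm_num) (by norm_num)]
    norm_num [a]
  have hQ3 : Q3 μ X = m - σ * b := by
    rw [Q3, quantile_eq_of_negWeibullCDF ha hs hcdf (by norm_num) (by norm_num)]
    norm_num [b]
  have hfence : Q1 μ X - 3 * IQR μ X = m - σ * (4 * a - 3 * b) := by
    rw [IQR, hQ1, hQ3]; ring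
  have hlt : m - σ * (4 * a - 3 * b) < m := sub_lt_self m (mul_pos hs (by linarith))
  rw [peL, hfence, toReal_measure_lt_eq_negWeibullCDF ha hcdf hlt,
    negWeibullCDF_sub_mul hs.ne']

theorem neg_weibull_peL (μ : Measure Ω) [IsProbabilityMeasure μ]
    (X : Ω → ℝ) (hX : Measurable X) (α m σ : ℝ) (ha : 0 < α) (hs : 0 < σ)
    (hcdf : ∀ x : ℝ, x < m →
      (μ {ω | X ω ≤ x}).toReal = Real.exp (-(-(x - m) / σ) ^ α))
    (hhigh : ∀ x : ℝ, m ≤ x → (μ {ω | X ω ≤ x}).toReal = 1) :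
    peL μ X = Real.exp
      (-(4 * (Real.log 4) ^ (1/α) - 3 * (Real.log (4/3)) ^ (1/α)) ^ α) :=
  neg_weibull_peL_general μ X α m σ ha hs hcdf
end

section
/- Let X have the Gumbel distribution with location μ ∈ ℝ and scale γ > 0, i.e. F_X(x) = exp(−exp(−(x−μ)/γ)). Then p_eL(X) = exp(−(log 4)^4 / (log(4/3))^3) and p_eR(X) = 1 − exp(−(log(4/3))^4 / (log 4)^3). -/
open MeasureTheory Real

variable {Ω : Type*} [MeasurableSpace Ω]

theorem gumbel_peL_peR (μ : Measure Ω) [IsProbabilityMeasure μ]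
    (X : Ω → ℝ) (hX : Measurable X) (m γ : ℝ) (hg : 0 < γ)
    (hcdf : ∀ x : ℝ,
      (μ {ω | X ω ≤ x}).toReal = Real.exp (-Real.exp (-((x - m) / γ)))) :
    peL μ X = Real.exp (-(Real.log 4) ^ 4 / (Real.log (4/3)) ^ 3) ∧
    peR μ X = 1 - Real.exp (-(Real.log (4/3)) ^ 4 / (Real.log 4) ^ 3) := by
  have hFcont : Continuous (fun x : ℝ => Real.exp (-Real.exp (-((x - m) / γ)))) := by
    fun_prop
  -- quantile formula
  have hq : ∀ p : ℝ, 0 < p → p < 1 →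
      quantile μ X p = m - γ * Real.log (-Real.log p) := by
    intro p hp0 hp1
    have hlp : 0 < -Real.log p := by
      have := Real.log_neg hp0 hp1; linarith
    have hset : {x : ℝ | p ≤ (μ {ω | X ω ≤ x}).toReal} =
        Set.Ici (m - γ * Real.log (-Real.log p)) := by
      ext x
      simp only [Set.mem_setOf_eq, Set.mem_Ici, hcdf x]
      rw [← Real.log_le_iff_le_exp hp0]
      constructor
      · intro h
        have h2 : Real.exp (-((x - m) / γ)) ≤ -Real.log p := by linarith
        have h3 : -((x - m) / γ) ≤ Real.log (-Real.log p) :=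
          (Real.le_log_iff_exp_le hlp).2 h2
        have h4 : -Real.log (-Real.log p) ≤ (x - m) / γ := by linarith
        have h5 := (le_div_iff₀ hg).mp h4
        linarith
      · intro h
        have h4 : -Real.log (-Real.log p) * γ ≤ x - m := by linarith
        have h3 : -((x - m) / γ) ≤ Real.log (-Real.log p) := by
          have := (le_div_iff₀ hg).mpr h4; linarith
        have h2 := (Real.le_log_iff_exp_le hlp).1 h3
        linarith
    rw [quantile, hset, csInf_Ici]
  -- measure of strict inequality
  have hlt : ∀ t : ℝ, (μ {ω | X ω < t}).toReal
      = Real.exp (-Real.exp (-((t - m) / γ))) := by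
    intro t
    set s : ℕ → Set Ω := fun n => {ω | X ω ≤ t - 1/(n+1)} with hs
    have hmono : Monotone s := by
      intro i j hij ω h
      simp only [hs, Set.mem_setOf_eq] at *
      have hj : (0:ℝ) < i + 1 := by positivity
      have : (1:ℝ)/(j+1) ≤ 1/(i+1) := by
        apply one_div_le_one_div_of_le hj
        exact_mod_cast by omega
      linarith
    have hunion : (⋃ n, s n) = {ω | X ω < t} := by
      ext ω
      simp only [Set.mem_iUnion, hs, Set.mem_setOf_eq]
      constructor
      · rintro ⟨n, h⟩
        have : (0:ℝ) < 1/(n+1) := by positivity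
        linarith
      · intro h
        obtain ⟨n, hn⟩ := exists_nat_one_div_lt (sub_pos.2 h)
        exact ⟨n, by linarith⟩
    have ht1 : Filter.Tendsto (fun n => μ (s n)) Filter.atTop
        (nhds (μ {ω | X ω < t})) := by
      rw [← hunion]; exact tendsto_measure_iUnion_atTop hmono
    have ht2 : Filter.Tendsto (fun n => (μ (s n)).toReal) Filter.atTop
        (nhds ((μ {ω | X ω < t}).toReal)) :=
      (ENNReal.tendsto_toReal (measure_ne_top μ _)).comp ht1
    have heq : (fun n : ℕ => (μ (s n)).toReal)
        = fun n : ℕ => Real.exp (-Real.exp (-((t - 1/(n+1) - m) / γ))) := by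
      funext n; exact hcdf _
    have ht3 : Filter.Tendsto (fun n : ℕ => t - 1/(n+1)) Filter.atTop (nhds t) := by
      have h0 : Filter.Tendsto (fun n : ℕ => 1/((n:ℝ)+1)) Filter.atTop (nhds 0) :=
        tendsto_one_div_add_atTop_nhds_zero_nat
      simpa using tendsto_const_nhds.sub h0
    have ht4 := (hFcont.tendsto t).comp ht3
    rw [heq] at ht2
    exact tendsto_nhds_unique ht2 ht4
  -- measure of strict reverse inequality
  have hgt : ∀ t : ℝ, (μ {ω | t < X ω}).toReal
      = 1 - Real.exp (-Real.exp (-((t - m) / γ))) := by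
    intro t
    have hcompl : {ω | t < X ω} = {ω | X ω ≤ t}ᶜ := by
      ext ω; simp [not_le]
    have hms : MeasurableSet {ω | X ω ≤ t} := measurableSet_le hX measurable_const
    rw [hcompl, measure_compl hms (measure_ne_top μ _), measure_univ,
      ENNReal.toReal_sub_of_le prob_le_one (by simp)]
    rw [hcdf t]; simp
  set a : ℝ := Real.log (Real.log 4) with ha
  set b : ℝ := Real.log (Real.log (4/3)) with hb
  have hQ1 : Q1 μ X = m - γ * a := by
    rw [Q1, hq (1/4) (by norm_num) (by norm_num)]
    congr 2
    rw [one_div, Real.log_inv, neg_neg]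
  have hQ3 : Q3 μ X = m - γ * b := by
    rw [Q3, hq (3/4) (by norm_num) (by norm_num)]
    congr 2
    rw [show (3:ℝ)/4 = (4/3)⁻¹ by norm_num, Real.log_inv, neg_neg]
  have e1 : Real.exp a = Real.log 4 := Real.exp_log (Real.log_pos (by norm_num))
  have e2 : Real.exp b = Real.log (4/3) := Real.exp_log (Real.log_pos (by norm_num))
  have h4a : Real.exp (4*a) = Real.exp a ^ 4 := by
    have := Real.exp_nat_mul a 4; push_cast at this; exact this
  have h3b : Real.exp (3*b) = Real.exp b ^ 3 := by
    have := Real.exp_nat_mul b 3; push_cast at this; exact this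
  have h4b : Real.exp (4*b) = Real.exp b ^ 4 := by
    have := Real.exp_nat_mul b 4; push_cast at this; exact this
  have h3a : Real.exp (3*a) = Real.exp a ^ 3 := by
    have := Real.exp_nat_mul a 3; push_cast at this; exact this
  constructor
  · rw [peL, IQR, hQ1, hQ3, hlt]
    congr 1
    have harg : -((m - γ * a - 3 * (m - γ * b - (m - γ * a)) - m) / γ)
        = 4*a - 3*b := by
      field_simp; ring
    rw [harg, Real.exp_sub, h4a, h3b, e1, e2, neg_div]
  · rw [peR, IQR, hQ1, hQ3, hgt]
    congr 2
    have harg : -((m - γ * b + 3 * (m - γ * b - (m - γ * a)) - m) / γ)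
        = 4*b - 3*a := by
      field_simp; ring
    rw [harg, Real.exp_sub, h4b, h3a, e1, e2, neg_div]
end
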